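/- Let w(r) = log(2/(1-r²)) and suppose r₁(t) → 1⁻ as t → ∞, and suppose m(t) = (1/5)[(1/4)z⁴ + (2/9)zP + (1/3)z³ + (1/3)P - C(t)] where z(t) = r₁w'(r₁) + O(s³), z³ = (r₁w'(r₁))³ + 12(r₁w'(r₁))²(log r₁)³·f̄₀ + o(s), z⁴ = (r₁w'(r₁))⁴ + 16(log r₁)³(r₁w'(r₁))³·f̄₀ + o(1), P(t) = 3(r₁w'(r₁))² + O(s²), and C(t) = (r₁⁴e^{4w(r₁)})/4 + f̄₀·(2/(1-r₁²))⁴(log r₁)⁴r₁⁴ + O(s), with s = |log r₁| and f̄₀ ∈ ℝ. Then lim_{t→∞} m(t) = -f̄₀. -/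

import Mathlib

/-!
Write `a = r w'(r)` and `L = log r`. The identity `a⁴/4 + a³ + a² = r⁴ e^{4w}/4` cancels every
term of the mass that blows up as `r → 1`, leaving `f̄₀ (4(aL)³ + 4(aL)²L - (w'L)⁴)` plus error
terms. Since `log r ∼ r - 1`, both `aL` and `w'L` tend to `-1`, so this part tends to `-5 f̄₀`;
the error terms vanish because `aL` stays bounded while `L → 0`.
-/

open Filter Topology Asymptotics

/-- `w(r) = log(2/(1-r²))`, the hyperbolic conformal factor. -/
noncomputable def wHyp (r : ℝ) : ℝ := Real.log (2 / (1 - r ^ 2))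

/-- `w'(r) = 2r/(1-r²)`. -/
noncomputable def wHypDeriv (r : ℝ) : ℝ := 2 * r / (1 - r ^ 2)

theorem exp_four_mul_wHyp {r : ℝ} (hr : r ^ 2 ≠ 1) :
    Real.exp (4 * wHyp r) = (2 / (1 - r ^ 2)) ^ 4 := by
  have hne : 2 / (1 - r ^ 2) ≠ 0 := div_ne_zero two_ne_zero (sub_ne_zero.2 hr.symm)
  rw [wHyp, show (4 : ℝ) = (4 : ℕ) by norm_num, ← Real.log_pow,
    Real.exp_log (Even.pow_pos (by decide) hne)]

theorem mul_wHypDeriv_quartic_eq {r : ℝ} (hr : r ^ 2 ≠ 1) :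
    (r * wHypDeriv r) ^ 4 / 4 + (r * wHypDeriv r) ^ 3 + (r * wHypDeriv r) ^ 2
      = r ^ 4 * Real.exp (4 * wHyp r) / 4 := by
  have hne : 1 - r ^ 2 ≠ 0 := sub_ne_zero.2 hr.symm
  rw [exp_four_mul_wHyp hr, wHypDeriv]
  field_simp
  ring

theorem tendsto_log_nhds_one : Tendsto Real.log (𝓝 1) (𝓝 0) := by
  simpa using (Real.continuousAt_log one_ne_zero).tendsto

theorem tendsto_log_div_sub_one : Tendsto (fun r => Real.log r / (r - 1)) (𝓝[≠] 1) (𝓝 1) := by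
  simpa [slope_fun_def, div_eq_inv_mul] using (Real.hasDerivAt_log one_ne_zero).tendsto_slope

theorem tendsto_wHypDeriv_mul_log :
    Tendsto (fun r => wHypDeriv r * Real.log r) (𝓝[≠] 1) (𝓝 (-1)) := by
  have hfactor : Tendsto (fun r : ℝ => -2 * r / (1 + r)) (𝓝[≠] 1) (𝓝 (-1)) := by
    have : ContinuousAt (fun r : ℝ => -2 * r / (1 + r)) 1 := by fun_prop (disch := norm_num)
    convert this.tendsto.mono_left nhdsWithin_le_nhds using 2
    norm_num
  have hprod := hfactor.mul tendsto_log_div_sub_one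
  rw [mul_one] at hprod
  refine hprod.congr' ?_
  have hgt : ∀ᶠ r in 𝓝[≠] (1 : ℝ), -1 < r :=
    mem_nhdsWithin_of_mem_nhds (Ioi_mem_nhds (by norm_num))
  filter_upwards [self_mem_nhdsWithin, hgt] with r (h1 : r ≠ 1) h2
  have h3 : 1 + r ≠ 0 := by linarith
  have h4 : r - 1 ≠ 0 := sub_ne_zero.2 h1
  have h5 : 1 - r ^ 2 ≠ 0 := by
    rw [show 1 - r ^ 2 = -((1 + r) * (r - 1)) by ring]
    exact neg_ne_zero.2 (mul_ne_zero h3 h4)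
  rw [wHypDeriv]
  field_simp
  ring

theorem tendsto_mul_wHypDeriv_mul_log :
    Tendsto (fun r => r * wHypDeriv r * Real.log r) (𝓝[≠] 1) (𝓝 (-1)) := by
  simpa [mul_assoc] using
    (tendsto_nhdsWithin_of_tendsto_nhds tendsto_id).mul tendsto_wHypDeriv_mul_log

theorem tendsto_massPrincipalPart :
    Tendsto (fun r => 4 * (r * wHypDeriv r * Real.log r) ^ 3
      + 4 * (r * wHypDeriv r * Real.log r) ^ 2 * Real.log r - (wHypDeriv r * Real.log r) ^ 4)
      (𝓝[≠] 1) (𝓝 (-5)) := by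
  convert ((tendsto_mul_wHypDeriv_mul_log.pow 3).const_mul 4).add
    (((tendsto_mul_wHypDeriv_mul_log.pow 2).const_mul 4).mul
      (tendsto_log_nhds_one.mono_left nhdsWithin_le_nhds))
    |>.sub (tendsto_wHypDeriv_mul_log.pow 4) using 2
  norm_num

theorem tendsto_mul_sub_const_mul_cube_of_isBigO {α : Type*} {l : Filter α} {a L z P : α → ℝ}
    {c k : ℝ} (haL : Tendsto (fun t => a t * L t) l (𝓝 c)) (hL : Tendsto L l (𝓝 0))
    (hz : (fun t => z t - a t) =O[l] fun t => |L t| ^ 3)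
    (hP : (fun t => P t - k * a t ^ 2) =O[l] fun t => |L t| ^ 2) :
    Tendsto (fun t => z t * P t - k * a t ^ 3) l (𝓝 0) := by
  have hs : Tendsto (fun t => |L t|) l (𝓝 0) := by simpa using hL.abs
  have haP : Tendsto (fun t => a t * (P t - k * a t ^ 2)) l (𝓝 0) := by
    refine ((isBigO_refl a l).mul hP).trans_tendsto ?_
    simpa [sq_abs, ← mul_assoc, sq] using haL.mul hL
  have haz : Tendsto (fun t => a t ^ 2 * (z t - a t)) l (𝓝 0) := by
    refine ((isBigO_refl (fun t => a t ^ 2) l).mul hz).trans_tendsto ?_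
    convert (haL.pow 2).mul hs using 2
    · rw [pow_succ _ 2, sq_abs]; ring
    · simp
  have hzP : Tendsto (fun t => (z t - a t) * (P t - k * a t ^ 2)) l (𝓝 0) := by
    refine (hz.mul hP).trans_tendsto ?_
    simpa using (hs.pow 3).mul (hs.pow 2)
  convert (haP.add (haz.const_mul k)).add hzP using 2
  · ring
  · simp

/-- Boundary limit of the quasi-local mass: with `r₁(t) → 1⁻`, `s = |log r₁|`, and the
asymptotic expansions of `z`, `z³`, `z⁴`, `P` and `C` as in the paper, the quasi-local
mass `m(t) = (1/5)[(1/4)z⁴ + (2/9)zP + (1/3)z³ + (1/3)P - C]` tends to `-f̄₀`. -/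
theorem quasi_local_mass_boundary_limit (r₁ z P C m : ℝ → ℝ) (f0 : ℝ)
    (hr₁ : Tendsto r₁ atTop (𝓝[<] (1:ℝ)))
    (hz : (fun t => z t - r₁ t * wHypDeriv (r₁ t))
        =O[atTop] fun t => |Real.log (r₁ t)| ^ 3)
    (hz3 : (fun t => (z t) ^ 3 - ((r₁ t * wHypDeriv (r₁ t)) ^ 3
          + 12 * (r₁ t * wHypDeriv (r₁ t)) ^ 2 * (Real.log (r₁ t)) ^ 3 * f0))
        =o[atTop] fun t => |Real.log (r₁ t)|)
    (hz4 : (fun t => (z t) ^ 4 - ((r₁ t * wHypDeriv (r₁ t)) ^ 4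
          + 16 * (Real.log (r₁ t)) ^ 3 * (r₁ t * wHypDeriv (r₁ t)) ^ 3 * f0))
        =o[atTop] fun _ => (1:ℝ))
    (hP : (fun t => P t - 3 * (r₁ t * wHypDeriv (r₁ t)) ^ 2)
        =O[atTop] fun t => |Real.log (r₁ t)| ^ 2)
    (hC : (fun t => C t - ((r₁ t) ^ 4 * Real.exp (4 * wHyp (r₁ t)) / 4
          + f0 * (2 / (1 - (r₁ t) ^ 2)) ^ 4 * (Real.log (r₁ t)) ^ 4 * (r₁ t) ^ 4))
        =O[atTop] fun t => |Real.log (r₁ t)|)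
    (hm : ∀ t, m t = (1/5) * ((1/4) * (z t) ^ 4 + (2/9) * z t * P t
        + (1/3) * (z t) ^ 3 + (1/3) * P t - C t)) :
    Tendsto m atTop (𝓝 (-f0)) := by
  have hr₁' : Tendsto r₁ atTop (𝓝[≠] 1) :=
    tendsto_nhdsWithin_mono_right (fun _ h => ne_of_lt h) hr₁
  have hL : Tendsto (fun t => Real.log (r₁ t)) atTop (𝓝 0) :=
    tendsto_log_nhds_one.comp (tendsto_nhds_of_tendsto_nhdsWithin hr₁)
  have hs : Tendsto (fun t => |Real.log (r₁ t)|) atTop (𝓝 0) := by simpa using hL.abs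
  have hzP := tendsto_mul_sub_const_mul_cube_of_isBigO
    (tendsto_mul_wHypDeriv_mul_log.comp hr₁') hL hz hP
  have hlim := ((tendsto_massPrincipalPart.comp hr₁').const_mul f0).add
    ((isLittleO_one_iff ℝ).mp hz4 |>.const_mul (1/4) |>.add (hzP.const_mul (2/9))
    |>.add (hz3.isBigO.trans_tendsto hs |>.const_mul (1/3))
    |>.add (hP.trans_tendsto (by simpa using hs.pow 2) |>.const_mul (1/3))
    |>.sub (hC.trans_tendsto hs)) |>.const_mul (1/5)
  convert hlim.congr' ?_ using 2
  · ring
  filter_upwards [hr₁ (Ioo_mem_nhdsLT (show (0 : ℝ) < 1 by norm_num))] with t ⟨h0, h1⟩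
  have hquartic := mul_wHypDeriv_quartic_eq (show r₁ t ^ 2 ≠ 1 by nlinarith)
  simp only [hm t, Function.comp_apply, wHypDeriv] at hquartic ⊢
  linear_combination (-1/5) * hquartic
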